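/- arXiv:1806.10959 — 2 statements merged into one kernel-verified Lean document; each statement's English description precedes it below -/
import Mathlib

section
/- For every integer r ≥ 2, every probability vector Ξ = (Ξ₁,…,Ξ_r), every real α > −1, every x ∈ [0,1], and all real y and d, one has F₁(y − d; x, Ξ) = F₁(y; x, Ξ) − F₂(y, d; Ξ). -/
open Finset

/-- `g(y; l, r) = ∑_{i=l}^{r} C(r,i) y^i (1−y)^{r−i}`. -/
noncomputable def g (r l : ℕ) (y : ℝ) : ℝ :=
  ∑ i ∈ Finset.Icc l r, (r.choose i : ℝ) * y ^ i * (1 - y) ^ (r - i)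

/-- `F₁(y; x, l, r) = g(y; l, r) − (2+α)y + x(1+α)`. -/
noncomputable def F1 (r l : ℕ) (α x y : ℝ) : ℝ :=
  g r l y - (2 + α) * y + x * (1 + α)

/-- `h(y, d; l, r) = ∑_{j=0}^{l−1} ∑_{i=l}^{r} C(r,i) C(i,j) (y−d)^j d^{i−j} (1−y)^{r−i}`. -/
noncomputable def h (r l : ℕ) (y d : ℝ) : ℝ :=
  ∑ j ∈ Finset.range l, ∑ i ∈ Finset.Icc l r,
    (r.choose i : ℝ) * (i.choose j : ℝ) * (y - d) ^ j * d ^ (i - j) * (1 - y) ^ (r - i)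

/-- `F₂(y, d; l, r) = h(y, d; l, r) − (2+α)d`. -/
noncomputable def F2 (r l : ℕ) (α y d : ℝ) : ℝ :=
  h r l y d - (2 + α) * d

/-- `F₁(y; x, Ξ) = ∑_{l=1}^{r} Ξ_l F₁(y; x, l, r)`. -/
noncomputable def F1Xi (r : ℕ) (Ξ : ℕ → ℝ) (α x y : ℝ) : ℝ :=
  ∑ l ∈ Finset.Icc 1 r, Ξ l * F1 r l α x y

/-- `F₂(y, d; Ξ) = ∑_{l=1}^{r} Ξ_l F₂(y, d; l, r)`. -/
noncomputable def F2Xi (r : ℕ) (Ξ : ℕ → ℝ) (α y d : ℝ) : ℝ :=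
  ∑ l ∈ Finset.Icc 1 r, Ξ l * F2 r l α y d

/-! Put `a = y - d`, `b = d`, `c = 1 - y` and expand `(a + b + c) ^ r` into the trinomial terms
`C(r,i) C(i,j) a^j b^(i-j) c^(r-i)`. Grouping them by `i` gives `g(y)` as the sum of the terms
with `i ≥ l`; grouping them by `j` gives `g(y - d)` as the sum of the terms with `j ≥ l`. The
difference is the sum of the terms with `j < l ≤ i`, which is `h(y, d)`. -/

section

variable {R : Type*} [CommSemiring R]

def trinomialTerm (r i j : ℕ) (a b c : R) : R :=
  (r.choose i : R) * (i.choose j : R) * a ^ j * b ^ (i - j) * c ^ (r - i)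

theorem choose_mul_add_pow_mul_pow (r i : ℕ) (a b c : R) :
    (r.choose i : R) * (a + b) ^ i * c ^ (r - i) =
      ∑ j ∈ range (i + 1), trinomialTerm r i j a b c := by
  rw [add_pow, mul_sum, sum_mul]
  refine sum_congr rfl fun j _ => ?_
  unfold trinomialTerm
  ring

theorem choose_mul_pow_mul_add_pow {r j : ℕ} (hjr : j ≤ r) (a b c : R) :
    (r.choose j : R) * a ^ j * (b + c) ^ (r - j) =
      ∑ i ∈ Icc j r, trinomialTerm r i j a b c := by
  rw [add_pow, mul_sum, ← Ico_add_one_right_eq_Icc, sum_Ico_eq_sum_range,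
    Nat.sub_add_comm hjr]
  refine sum_congr rfl fun k _ => ?_
  have hchoose : (r.choose (j + k) : R) * ((j + k).choose j : R) =
      (r.choose j : R) * ((r - j).choose k : R) := by
    rw [← Nat.cast_mul, ← Nat.cast_mul, Nat.choose_mul (Nat.le_add_right j k),
      Nat.add_sub_cancel_left]
  unfold trinomialTerm
  rw [Nat.add_sub_cancel_left, Nat.sub_add_eq, hchoose]
  ring

theorem sum_choose_mul_add_pow_mul_pow (r l : ℕ) (a b c : R) :
    ∑ i ∈ Icc l r, (r.choose i : R) * (a + b) ^ i * c ^ (r - i) =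
      ∑ j ∈ range l, ∑ i ∈ Icc l r, trinomialTerm r i j a b c +
        ∑ j ∈ Icc l r, (r.choose j : R) * a ^ j * (b + c) ^ (r - j) := by
  have hsplit : ∀ i ∈ Icc l r, (r.choose i : R) * (a + b) ^ i * c ^ (r - i) =
      ∑ j ∈ range l, trinomialTerm r i j a b c + ∑ j ∈ Icc l i, trinomialTerm r i j a b c := by
    intro i hi
    rw [choose_mul_add_pow_mul_pow, ← Ico_add_one_right_eq_Icc,
      sum_range_add_sum_Ico _ (by grind)]
  rw [sum_congr rfl hsplit, sum_add_distrib, sum_comm,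
    sum_congr rfl fun j hj => choose_mul_pow_mul_add_pow (mem_Icc.mp hj).2 a b c]
  congr 1
  exact sum_comm' fun i j => by simp only [mem_Icc]; omega

end

theorem g_sub_eq_sub_h (r l : ℕ) (y d : ℝ) : g r l (y - d) = g r l y - h r l y d := by
  have key := sum_choose_mul_add_pow_mul_pow r l (y - d) d (1 - y)
  rw [sub_add_cancel, show d + (1 - y) = 1 - (y - d) by ring] at key
  rw [g, g, h, key]
  exact (add_sub_cancel_left _ _).symm

theorem F1_sub_eq_sub_F2 (r l : ℕ) (α x y d : ℝ) :
    F1 r l α x (y - d) = F1 r l α x y - F2 r l α y d := by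
  rw [F1, F1, F2, g_sub_eq_sub_h]
  ring

theorem stmt_7_general (r : ℕ) (Ξ : ℕ → ℝ) (α : ℝ) (x : ℝ) (y d : ℝ) :
    F1Xi r Ξ α x (y - d) = F1Xi r Ξ α x y - F2Xi r Ξ α y d := by
  rw [F1Xi, F1Xi, F2Xi, ← sum_sub_distrib]
  refine sum_congr rfl fun l _ => ?_
  rw [F1_sub_eq_sub_F2, mul_sub]

theorem stmt_7 (r : ℕ) (hr : 2 ≤ r)
    (Ξ : ℕ → ℝ) (hΞnn : ∀ l, 0 ≤ Ξ l) (hΞsum : ∑ l ∈ Finset.Icc 1 r, Ξ l = 1)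
    (α : ℝ) (hα : -1 < α) (x : ℝ) (hx : x ∈ Set.Icc (0 : ℝ) 1) (y d : ℝ) :
    F1Xi r Ξ α x (y - d) = F1Xi r Ξ α x y - F2Xi r Ξ α y d :=
  stmt_7_general r Ξ α x y d
end

section
/- Fix an integer r ≥ 2, a probability vector Ξ, a real α > −1 and x ∈ [0,1]. (i) If y_i and y_j are real numbers with F₁(y_i; x, Ξ) = 0 and F₁(y_j; x, Ξ) = 0, then F₂(y_i, y_i − y_j; Ξ) = 0. (ii) Conversely, if F₁(y; x, Ξ) = 0 and F₂(y, d; Ξ) = 0, then F₁(y − d; x, Ξ) = 0. -/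
open Finset

/-
Substituting `y = (y - d) + d` and expanding `y ^ i` binomially splits each term of `g(y; l, r)`
according to the power `j` of `y - d`. The part with `j < l` is exactly `h(y, d; l, r)`; in the part
with `j ≥ l` the sum over `i` collapses, by `C(r,i) C(i,j) = C(r,j) C(r-j,i-j)` and the binomial
theorem, to `C(r,j) (y-d)^j (1-(y-d))^(r-j)`, i.e. to `g(y - d; l, r)`. Hence
`F₂(y, d; Ξ) = F₁(y; x, Ξ) - F₁(y - d; x, Ξ)` identically, and both claims follow at once.
-/

lemma sum_choose_mul_choose_mul_pow (r j : ℕ) (hj : j ≤ r) (d u : ℝ) :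
    ∑ i ∈ Icc j r, (r.choose i : ℝ) * (i.choose j : ℝ) * d ^ (i - j) * u ^ (r - i)
      = (r.choose j : ℝ) * (d + u) ^ (r - j) := by
  rw [add_pow, mul_sum, show Icc j r = Ico j (r + 1) by rfl, sum_Ico_eq_sum_range,
    show r + 1 - j = r - j + 1 by omega]
  refine sum_congr rfl fun k _ => ?_
  have hchoose : (r.choose (j + k) : ℝ) * ((j + k).choose j : ℝ)
      = (r.choose j : ℝ) * ((r - j).choose k : ℝ) := by
    have := Nat.choose_mul (n := r) (show j ≤ j + k by omega)
    rw [Nat.add_sub_cancel_left] at this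
    exact_mod_cast this
  rw [Nat.add_sub_cancel_left, show r - (j + k) = r - j - k by omega, hchoose]
  ring

lemma choose_mul_pow_mul_pow_eq_sum_split (r l i : ℕ) (hli : l ≤ i + 1) (y d : ℝ) :
    (r.choose i : ℝ) * y ^ i * (1 - y) ^ (r - i)
      = ∑ j ∈ range l,
          (r.choose i : ℝ) * (i.choose j : ℝ) * (y - d) ^ j * d ^ (i - j) * (1 - y) ^ (r - i)
        + ∑ j ∈ Ico l (i + 1),
          (r.choose i : ℝ) * (i.choose j : ℝ) * (y - d) ^ j * d ^ (i - j) * (1 - y) ^ (r - i) := by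
  rw [show y ^ i = ((y - d) + d) ^ i by ring_nf, add_pow, mul_sum, sum_mul, range_eq_Ico,
    ← sum_Ico_consecutive _ (Nat.zero_le l) hli, ← range_eq_Ico]
  congr 1 <;> exact sum_congr rfl fun j _ => by ring

lemma g_eq_h_add_g_sub (r l : ℕ) (y d : ℝ) : g r l y = h r l y d + g r l (y - d) := by
  rw [g, sum_congr rfl fun i hi =>
      choose_mul_pow_mul_pow_eq_sum_split r l i (by simp only [mem_Icc] at hi; omega) y d,
    sum_add_distrib, h, sum_comm]
  congr 1
  rw [sum_comm' (s' := fun j => Icc j r) (t' := Icc l r)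
      (by intro i j; simp only [mem_Icc, mem_Ico]; omega), g]
  refine sum_congr rfl fun j hj => ?_
  have hinner := sum_choose_mul_choose_mul_pow r j (mem_Icc.mp hj).2 d (1 - y)
  calc ∑ i ∈ Icc j r,
        (r.choose i : ℝ) * (i.choose j : ℝ) * (y - d) ^ j * d ^ (i - j) * (1 - y) ^ (r - i)
      = (y - d) ^ j * ∑ i ∈ Icc j r,
          (r.choose i : ℝ) * (i.choose j : ℝ) * d ^ (i - j) * (1 - y) ^ (r - i) := by
        rw [mul_sum]; exact sum_congr rfl fun i _ => by ring
    _ = (r.choose j : ℝ) * (y - d) ^ j * (1 - (y - d)) ^ (r - j) := by rw [hinner]; ring_nf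

lemma F2_eq_F1_sub_F1 (r l : ℕ) (α x y d : ℝ) :
    F2 r l α y d = F1 r l α x y - F1 r l α x (y - d) := by
  rw [F1, F1, F2, g_eq_h_add_g_sub r l y d]
  ring

lemma F2Xi_eq_F1Xi_sub_F1Xi (r : ℕ) (Ξ : ℕ → ℝ) (α x y d : ℝ) :
    F2Xi r Ξ α y d = F1Xi r Ξ α x y - F1Xi r Ξ α x (y - d) := by
  rw [F2Xi, F1Xi, F1Xi, ← sum_sub_distrib]
  exact sum_congr rfl fun l _ => by rw [F2_eq_F1_sub_F1 r l α x y d, mul_sub]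

theorem stmt_8_general (r : ℕ)
    (Ξ : ℕ → ℝ)
    (α : ℝ) (x : ℝ) :
    (∀ yi yj : ℝ, F1Xi r Ξ α x yi = 0 → F1Xi r Ξ α x yj = 0 →
      F2Xi r Ξ α yi (yi - yj) = 0) ∧
    (∀ y d : ℝ, F1Xi r Ξ α x y = 0 → F2Xi r Ξ α y d = 0 →
      F1Xi r Ξ α x (y - d) = 0) := by
  refine ⟨fun yi yj hi hj => ?_, fun y d hy hd => ?_⟩
  · rw [F2Xi_eq_F1Xi_sub_F1Xi r Ξ α x, sub_sub_cancel, hi, hj, sub_zero]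
  · rwa [F2Xi_eq_F1Xi_sub_F1Xi r Ξ α x, hy, zero_sub, neg_eq_zero] at hd

theorem stmt_8 (r : ℕ) (hr : 2 ≤ r)
    (Ξ : ℕ → ℝ) (hΞnn : ∀ l, 0 ≤ Ξ l) (hΞsum : ∑ l ∈ Finset.Icc 1 r, Ξ l = 1)
    (α : ℝ) (hα : -1 < α) (x : ℝ) (hx : x ∈ Set.Icc (0 : ℝ) 1) :
    (∀ yi yj : ℝ, F1Xi r Ξ α x yi = 0 → F1Xi r Ξ α x yj = 0 →
      F2Xi r Ξ α yi (yi - yj) = 0) ∧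
    (∀ y d : ℝ, F1Xi r Ξ α x y = 0 → F2Xi r Ξ α y d = 0 →
      F1Xi r Ξ α x (y - d) = 0) :=
  stmt_8_general r Ξ α x
end
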